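/- arXiv:1309.1190 — 2 statements merged into one kernel-verified Lean document; each statement's English description precedes it below -/
import Mathlib

section
/- If μ ∈ (0,1) and ψ(s) = s^{−μ} on (0,T], then ψ ∈ L¹(0,T) and for any bounded measurable g : [0,T] → ℝ≥0 satisfying g(t) ≤ c∫₀ᵗ ψ(t−s) g(s) ds for all t ∈ [0,T] with c ≥ 0, we have g ≡ 0 on [0,T] (singular Gronwall lemma). -/
/-!
If `g` vanishes on `[0, a]`, the inequality only sees `g` on `[a, t]`, where the kernel has mass
`(t - a)^(1-μ)/(1-μ)`; so any bound `K` for `g` on `[0, b]` improves to `q K` with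
`q = c (b - a)^(1-μ)/(1-μ)`. For `b - a ≤ δ` small this `q` is `< 1`, iterating forces `g = 0`
on `[0, b]`, and finitely many steps of length `δ` cover `[0, T]`.
-/

open MeasureTheory Set Filter Topology intervalIntegral
open scoped Interval

lemma eqOn_zero_of_bound_contraction {α : Type*} {S : Set α} {f : α → ℝ} {q M : ℝ}
    (hq0 : 0 ≤ q) (hq1 : q < 1) (hf0 : ∀ x ∈ S, 0 ≤ f x) (hM : ∀ x ∈ S, f x ≤ M)
    (hcontr : ∀ K, (∀ x ∈ S, f x ≤ K) → ∀ x ∈ S, f x ≤ q * K) :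
    EqOn f 0 S := by
  have hpow : ∀ n : ℕ, ∀ x ∈ S, f x ≤ q ^ n * M := by
    intro n
    induction n with
    | zero => simpa using hM
    | succ n ih =>
      intro x hx
      calc f x ≤ q * (q ^ n * M) := hcontr _ ih x hx
        _ = q ^ (n + 1) * M := by ring
  intro x hx
  have hlim : Tendsto (fun n : ℕ => q ^ n * M) atTop (𝓝 0) := by
    simpa using (tendsto_pow_atTop_nhds_zero_of_lt_one hq0 hq1).mul_const M
  exact le_antisymm (ge_of_tendsto' hlim fun n => hpow n x hx) (hf0 x hx)

section Kernel

variable {μ : ℝ}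

lemma intervalIntegrable_sub_rpow_neg (hμ : μ < 1) (a t : ℝ) :
    IntervalIntegrable (fun s : ℝ => (t - s) ^ (-μ)) volume a t := by
  simpa using (intervalIntegrable_rpow' (a := t - a) (b := 0)
    (show (-1 : ℝ) < -μ by linarith)).comp_sub_left t

lemma integral_sub_rpow_neg (hμ : μ < 1) (a t : ℝ) :
    ∫ s in a..t, (t - s) ^ (-μ) = (t - a) ^ (1 - μ) / (1 - μ) := by
  rw [integral_comp_sub_left (fun u : ℝ => u ^ (-μ)) t, sub_self,
    integral_rpow (Or.inl (by linarith)), Real.zero_rpow (by linarith)]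
  ring_nf

lemma intervalIntegrable_sub_rpow_neg_mul (hμ : μ < 1) {g : ℝ → ℝ} (hg : Measurable g)
    {a t K : ℝ} (hK : ∀ s ∈ Ι a t, ‖g s‖ ≤ K) :
    IntervalIntegrable (fun s => (t - s) ^ (-μ) * g s) volume a t :=
  intervalIntegrable_iff.2 <| (intervalIntegrable_iff.1
    (intervalIntegrable_sub_rpow_neg hμ a t)).mul_bdd hg.aestronglyMeasurable
    (ae_restrict_of_forall_mem measurableSet_uIoc hK)

lemma exists_pos_mul_rpow_div_lt_one (hμ : μ < 1) (c : ℝ) :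
    ∃ δ > 0, c * δ ^ (1 - μ) / (1 - μ) < 1 := by
  have hlim : Tendsto (fun δ : ℝ => c * δ ^ (1 - μ) / (1 - μ)) (𝓝[>] 0) (𝓝 0) := by
    have h := ((Real.continuousAt_rpow_const 0 (1 - μ) (Or.inr (by linarith))).tendsto.const_mul
      c).div_const (1 - μ)
    simpa [Real.zero_rpow (show 1 - μ ≠ 0 by linarith)] using h.mono_left nhdsWithin_le_nhds
  obtain ⟨δ, hsmall, hδ⟩ :=
    ((hlim.eventually (gt_mem_nhds one_pos)).and self_mem_nhdsWithin).exists
  exact ⟨δ, hδ, hsmall⟩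

end Kernel

section Volterra

variable {μ c a b K : ℝ} {g : ℝ → ℝ}

lemma integral_sub_rpow_neg_mul_eq_of_eqOn_zero (hμ : μ < 1) (hg : Measurable g)
    (ha : 0 ≤ a) {t : ℝ} (hat : a ≤ t) (hzero : EqOn g 0 (Icc 0 a))
    (hK : ∀ s ∈ Ι 0 t, ‖g s‖ ≤ K) :
    ∫ s in (0:ℝ)..t, (t - s) ^ (-μ) * g s = ∫ s in a..t, (t - s) ^ (-μ) * g s := by
  have hint := intervalIntegrable_sub_rpow_neg_mul hμ hg hK
  have ha_mem : a ∈ uIcc 0 t := by rw [uIcc_of_le (ha.trans hat)]; exact ⟨ha, hat⟩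
  have hvanish : ∫ s in (0:ℝ)..a, (t - s) ^ (-μ) * g s = 0 := by
    refine (integral_congr fun s hs => ?_).trans integral_zero
    rw [uIcc_of_le ha] at hs
    simp [hzero hs]
  rw [← integral_add_adjacent_intervals (hint.mono_set (uIcc_subset_uIcc_left ha_mem))
    (hint.mono_set (uIcc_subset_uIcc_right ha_mem)), hvanish, zero_add]

lemma volterra_le_mul_of_eqOn_zero (hμ : μ < 1) (hc : 0 ≤ c) (hg : Measurable g)
    (hG : ∀ t ∈ Icc 0 b, g t ≤ c * ∫ s in (0:ℝ)..t, (t - s) ^ (-μ) * g s)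
    (ha : 0 ≤ a) (hab : a ≤ b) (hzero : EqOn g 0 (Icc 0 a))
    (hg0 : ∀ s ∈ Icc 0 b, 0 ≤ g s) (hK : ∀ s ∈ Icc 0 b, g s ≤ K) :
    ∀ t ∈ Icc 0 b, g t ≤ c * (b - a) ^ (1 - μ) / (1 - μ) * K := by
  intro t ht
  have hK0 : 0 ≤ K := (hg0 t ht).trans (hK t ht)
  rcases le_total t a with hta | hat
  · have := sub_nonneg.2 hab
    rw [hzero ⟨ht.1, hta⟩]
    positivity
  have hbound : ∀ s ∈ Ι 0 t, ‖g s‖ ≤ K := fun s hs => by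
    rw [uIoc_of_le ht.1] at hs
    have hs' : s ∈ Icc 0 b := ⟨hs.1.le, hs.2.trans ht.2⟩
    rw [Real.norm_of_nonneg (hg0 s hs')]
    exact hK s hs'
  calc g t ≤ c * ∫ s in (0:ℝ)..t, (t - s) ^ (-μ) * g s := hG t ht
    _ = c * ∫ s in a..t, (t - s) ^ (-μ) * g s := by
      rw [integral_sub_rpow_neg_mul_eq_of_eqOn_zero hμ hg ha hat hzero hbound]
    _ ≤ c * ∫ s in a..t, (t - s) ^ (-μ) * K := by
      gcongr
      refine integral_mono_on hat ?_ ((intervalIntegrable_sub_rpow_neg hμ a t).mul_const K)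
        fun s hs => ?_
      · have ha_mem : a ∈ uIcc 0 t := by rw [uIcc_of_le ht.1]; exact ⟨ha, hat⟩
        exact (intervalIntegrable_sub_rpow_neg_mul hμ hg hbound).mono_set
          (uIcc_subset_uIcc_right ha_mem)
      · have hs' : s ∈ Icc 0 b := ⟨ha.trans hs.1, hs.2.trans ht.2⟩
        exact mul_le_mul_of_nonneg_left (hK s hs') (Real.rpow_nonneg (by linarith [hs.2]) _)
    _ = c * (t - a) ^ (1 - μ) / (1 - μ) * K := by
      rw [intervalIntegral.integral_mul_const, integral_sub_rpow_neg hμ]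
      ring
    _ ≤ c * (b - a) ^ (1 - μ) / (1 - μ) * K := by
      gcongr
      exact ht.2

lemma volterra_eqOn_zero_Icc_of_eqOn_zero {M : ℝ} (hμ : μ < 1) (hc : 0 ≤ c)
    (hg : Measurable g)
    (hg0 : ∀ s ∈ Icc 0 b, 0 ≤ g s) (hM : ∀ s ∈ Icc 0 b, g s ≤ M)
    (hG : ∀ t ∈ Icc 0 b, g t ≤ c * ∫ s in (0:ℝ)..t, (t - s) ^ (-μ) * g s)
    (ha : 0 ≤ a) (hab : a ≤ b) (hsmall : c * (b - a) ^ (1 - μ) / (1 - μ) < 1)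
    (hzero : EqOn g 0 (Icc 0 a)) :
    EqOn g 0 (Icc 0 b) := by
  have := sub_nonneg.2 hab
  have : 0 < 1 - μ := by linarith
  exact eqOn_zero_of_bound_contraction (by positivity) hsmall hg0 hM fun _ hK =>
    volterra_le_mul_of_eqOn_zero hμ hc hg hG ha hab hzero hg0 hK

lemma volterra_eqOn_zero_Icc_min {T M δ : ℝ} (hμ : μ < 1) (hc : 0 ≤ c) (hg : Measurable g)
    (hT : 0 ≤ T) (hg0 : ∀ s ∈ Icc 0 T, 0 ≤ g s) (hM : ∀ s ∈ Icc 0 T, g s ≤ M)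
    (hG : ∀ t ∈ Icc 0 T, g t ≤ c * ∫ s in (0:ℝ)..t, (t - s) ^ (-μ) * g s)
    (hδ : 0 < δ) (hsmall : c * δ ^ (1 - μ) / (1 - μ) < 1) (n : ℕ) :
    EqOn g 0 (Icc 0 (min (n * δ) T)) := by
  induction n with
  | zero =>
    rw [Nat.cast_zero, zero_mul, min_eq_left hT, Icc_self]
    rintro s rfl
    exact le_antisymm (by simpa using hG 0 ⟨le_rfl, hT⟩) (hg0 0 ⟨le_rfl, hT⟩)
  | succ n ih =>
    set a := min (n * δ) T
    set b := min ((n + 1 : ℕ) * δ) T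
    have hsub : Icc 0 b ⊆ Icc 0 T := Icc_subset_Icc_right (min_le_right _ _)
    have hab : a ≤ b := min_le_min_right _ (by push_cast; linarith)
    have hba : b ≤ a + δ :=
      (min_le_min (by push_cast; linarith) (by linarith)).trans_eq (min_add_add_right _ _ δ)
    refine volterra_eqOn_zero_Icc_of_eqOn_zero hμ hc hg (fun s hs => hg0 s (hsub hs))
      (fun s hs => hM s (hsub hs)) (fun t ht => hG t (hsub ht))
      (le_min (by positivity) hT) hab (lt_of_le_of_lt ?_ hsmall) ih
    have : 0 < 1 - μ := by linarith
    gcongr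
    linarith

end Volterra

theorem stmt15_general (T μ c : ℝ) (hT : 0 < T) (hμ1 : μ < 1) (hc : 0 ≤ c)
    (g : ℝ → ℝ) (hg0 : ∀ t ∈ Set.Icc (0:ℝ) T, 0 ≤ g t) (hmeas : Measurable g)
    (hbdd : ∃ M : ℝ, ∀ t ∈ Set.Icc (0:ℝ) T, g t ≤ M)
    (hG : ∀ t ∈ Set.Icc (0:ℝ) T, g t ≤ c * ∫ s in (0:ℝ)..t, (t - s) ^ (-μ) * g s) :
    MeasureTheory.IntegrableOn (fun s : ℝ => s ^ (-μ)) (Set.Ioc 0 T) ∧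
    ∀ t ∈ Set.Icc (0:ℝ) T, g t = 0 := by
  refine ⟨(intervalIntegrable_rpow' (show (-1 : ℝ) < -μ by linarith)).1, fun t ht => ?_⟩
  obtain ⟨M, hM⟩ := hbdd
  obtain ⟨δ, hδ, hsmall⟩ := exists_pos_mul_rpow_div_lt_one hμ1 c
  obtain ⟨n, hn⟩ := exists_nat_ge (T / δ)
  have hvanish := volterra_eqOn_zero_Icc_min hμ1 hc hmeas hT.le hg0 hM hG hδ hsmall n
  rw [min_eq_right ((div_le_iff₀ hδ).1 hn)] at hvanish
  exact hvanish ht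

/-- Singular Gronwall lemma: for `μ ∈ (0,1)` the kernel `s ↦ s^{−μ}` is integrable on
`(0,T]`, and any bounded measurable nonnegative `g` on `[0,T]` satisfying
`g(t) ≤ c ∫₀ᵗ (t−s)^{−μ} g(s) ds` vanishes identically on `[0,T]`. -/
theorem stmt15 (T μ c : ℝ) (hT : 0 < T) (hμ0 : 0 < μ) (hμ1 : μ < 1) (hc : 0 ≤ c)
    (g : ℝ → ℝ) (hg0 : ∀ t ∈ Set.Icc (0:ℝ) T, 0 ≤ g t) (hmeas : Measurable g)
    (hbdd : ∃ M : ℝ, ∀ t ∈ Set.Icc (0:ℝ) T, g t ≤ M)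
    (hG : ∀ t ∈ Set.Icc (0:ℝ) T, g t ≤ c * ∫ s in (0:ℝ)..t, (t - s) ^ (-μ) * g s) :
    MeasureTheory.IntegrableOn (fun s : ℝ => s ^ (-μ)) (Set.Ioc 0 T) ∧
    ∀ t ∈ Set.Icc (0:ℝ) T, g t = 0 :=
  stmt15_general T μ c hT hμ1 hc g hg0 hmeas hbdd hG
end

section
/- For smooth divergence-free u on T², the identity ⟨B(u), u⟩_{H¹} = 0 holds, where B(u) = Π((u·∇)u) with Π the Helmholtz (Leray) projection and ⟨f,g⟩_{H¹} = ⟨∇f, ∇g⟩_{L²} + lower-order term given by the H¹ Riesz-potential inner product on zero-mean fields. -/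
open MeasureTheory

/-- The convective term `(u·∇)f` for maps `ℝ² → ℝ²`. -/
noncomputable def convect (u f : ℝ × ℝ → ℝ × ℝ) (x : ℝ × ℝ) : ℝ × ℝ :=
  (u x).1 • fderiv ℝ f x (1, 0) + (u x).2 • fderiv ℝ f x (0, 1)

noncomputable def pd (v : ℝ × ℝ) (f : ℝ × ℝ → ℝ) : ℝ × ℝ → ℝ := fun x => fderiv ℝ f x v
@[fun_prop] theorem pd_contDiff (v : ℝ × ℝ) (f : ℝ × ℝ → ℝ) (hf : ContDiff ℝ (⊤ : ℕ∞) f) :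
    ContDiff ℝ (⊤ : ℕ∞) (pd v f) := (hf.fderiv_right (by simp)).clm_apply contDiff_const
@[fun_prop] theorem pd_differentiable (v : ℝ × ℝ) (f : ℝ × ℝ → ℝ) (hf : ContDiff ℝ (⊤ : ℕ∞) f) :
    Differentiable ℝ (pd v f) := (pd_contDiff v f hf).differentiable (by simp)
theorem pd_add (f g : ℝ × ℝ → ℝ) (hf : Differentiable ℝ f) (hg : Differentiable ℝ g) (v : ℝ × ℝ) :
    pd v (fun x => f x + g x) = fun x => pd v f x + pd v g x := by
  funext x; simp only [pd]; rw [fderiv_fun_add (hf x) (hg x)]; rfl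
theorem pd_sub (f g : ℝ × ℝ → ℝ) (hf : Differentiable ℝ f) (hg : Differentiable ℝ g) (v : ℝ × ℝ) :
    pd v (fun x => f x - g x) = fun x => pd v f x - pd v g x := by
  funext x; simp only [pd]; rw [fderiv_fun_sub (hf x) (hg x)]; rfl
theorem pd_neg (f : ℝ × ℝ → ℝ) (v : ℝ × ℝ) :
    pd v (fun x => -(f x)) = fun x => -(pd v f x) := by
  funext x; simp only [pd]; rw [fderiv_fun_neg]; rfl
theorem pd_mul (f g : ℝ × ℝ → ℝ) (hf : Differentiable ℝ f) (hg : Differentiable ℝ g) (v : ℝ × ℝ) :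
    pd v (fun x => f x * g x) = fun x => f x * pd v g x + g x * pd v f x := by
  funext x; simp only [pd]; rw [fderiv_fun_mul (hf x) (hg x)]; simp [mul_comm]
theorem pd_comm (f : ℝ × ℝ → ℝ) (hf : ContDiff ℝ (⊤ : ℕ∞) f) (v w : ℝ × ℝ) :
    pd v (pd w f) = pd w (pd v f) := by
  funext x
  have hsym : IsSymmSndFDerivAt ℝ f x := by
    apply ContDiffAt.isSymmSndFDerivAt hf.contDiffAt
    rw [minSmoothness_of_isRCLikeNormedField]; exact WithTop.coe_le_coe.mpr (le_top : (2:ℕ∞) ≤ ⊤)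
  have key : ∀ (z z' : ℝ × ℝ), pd z (pd z' f) x = fderiv ℝ (fderiv ℝ f) x z z' := by
    intro z z'
    show fderiv ℝ (fun y => fderiv ℝ f y z') x z = fderiv ℝ (fderiv ℝ f) x z z'
    have hd : DifferentiableAt ℝ (fun y => fderiv ℝ f y) x :=
      ((hf.fderiv_right (m := (⊤ : ℕ∞)) ((by simp))).differentiable (by simp)) x
    rw [fderiv_clm_apply hd (differentiableAt_const z')]
    simp
  rw [key, key]
  exact hsym v w
theorem pd_21 (f : ℝ × ℝ → ℝ) (hf : ContDiff ℝ (⊤ : ℕ∞) f) :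
    pd (0,1) (pd (1,0) f) = pd (1,0) (pd (0,1) f) := pd_comm f hf _ _

theorem key_identity (a b p : ℝ × ℝ → ℝ) (ha : ContDiff ℝ (⊤ : ℕ∞) a) (hb : ContDiff ℝ (⊤ : ℕ∞) b)
    (hp : ContDiff ℝ (⊤ : ℕ∞) p) (hfun : pd (0,1) b = fun x => -(pd (1,0) a x)) (x : ℝ × ℝ) :
    (pd (1,0) (fun y => a y * pd (1,0) a y + b y * pd (0,1) a y - pd (1,0) p y) x * pd (1,0) a x + pd (0,1) (fun y => a y * pd (1,0) a y + b y * pd (0,1) a y - pd (1,0) p y) x * pd (0,1) a x + pd (1,0) (fun y => a y * pd (1,0) b y + b y * pd (0,1) b y - pd (0,1) p y) x * pd (1,0) b x + pd (0,1) (fun y => a y * pd (1,0) b y + b y * pd (0,1) b y - pd (0,1) p y) x * pd (0,1) b x) + (pd (1,0) (fun y => a y * pd (1,0) a y + b y * pd (0,1) a y - pd (1,0) p y) x * pd (1,0) a x + pd (0,1) (fun y => a y * pd (1,0) a y + b y * pd (0,1) a y - pd (1,0) p y) x * pd (0,1) a x + pd (1,0) (fun y => a y * pd (1,0) b y + b y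 * pd (0,1) b y - pd (0,1) p y) x * pd (1,0) b x + pd (0,1) (fun y => a y * pd (1,0) b y + b y * pd (0,1) b y - pd (0,1) p y) x * pd (0,1) b x)
      = pd (1,0) (fun y => ((a y * pd (1,0) a y + b y * pd (0,1) a y - pd (1,0) p y) * pd (1,0) a y) + ((a y * pd (1,0) a y + b y * pd (0,1) a y - pd (1,0) p y) * pd (1,0) a y) + ((a y * pd (1,0) b y + b y * pd (0,1) b y - pd (0,1) p y) * pd (1,0) b y) + ((a y * pd (1,0) b y + b y * pd (0,1) b y - pd (0,1) p y) * pd (1,0) b y) + (p y * (pd (1,0) (pd (1,0) a) y + pd (0,1) (pd (0,1) a) y)) + (p y * (pd (1,0) (pd (1,0) a) y + pd (0,1) (pd (0,1) a) y)) - (((a y * pd (1,0) b y + b y * pd (0,1) b y) * (pd (1,0) b y - pd (0,1) a y)) + ((a y * pd (1,0) b y + b y * pd (0,1) b y) * (pd (1,0) b y - pd (0,1) a y))) + a y * ((pd (1,0) b y - pd (0,1) a y) * (pd (1,0) b y - pd (0,1) a y))) x + pd (0,1) (fun y => ((a y * pd (1,0) a y + b y * pd (0,1) a y - pd (1,0)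 p y) * pd (0,1) a y) + ((a y * pd (1,0) a y + b y * pd (0,1) a y - pd (1,0) p y) * pd (0,1) a y) + ((a y * pd (1,0) b y + b y * pd (0,1) b y - pd (0,1) p y) * pd (0,1) b y) + ((a y * pd (1,0) b y + b y * pd (0,1) b y - pd (0,1) p y) * pd (0,1) b y) + (p y * (pd (1,0) (pd (1,0) b) y + pd (0,1) (pd (0,1) b) y)) + (p y * (pd (1,0) (pd (1,0) b) y + pd (0,1) (pd (0,1) b) y)) + ((a y * pd (1,0) a y + b y * pd (0,1) a y) * (pd (1,0) b y - pd (0,1) a y)) + ((a y * pd (1,0) a y + b y * pd (0,1) a y) * (pd (1,0) b y - pd (0,1) a y)) + b y * ((pd (1,0) b y - pd (0,1) a y) * (pd (1,0) b y - pd (0,1) a y))) x := by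
  have ha' : Differentiable ℝ a := ha.differentiable (by simp)
  have hb' : Differentiable ℝ b := hb.differentiable (by simp)
  have hp' : Differentiable ℝ p := hp.differentiable (by simp)
  simp (disch := fun_prop) only [hfun, pd_add, pd_sub, pd_mul, pd_neg, pd_21]
  ring

open MeasureTheory
/-- FTC in the second variable. -/
theorem inner_ftc (F : ℝ × ℝ → ℝ) (hF : ContDiff ℝ (⊤ : ℕ∞) F)
    (hper : ∀ x : ℝ × ℝ, F (x + (0, 2 * Real.pi)) = F x) (x : ℝ) :
    ∫ y in Set.Icc (0:ℝ) (2 * Real.pi), pd (0,1) F (x, y) = 0 := by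
  rw [MeasureTheory.integral_Icc_eq_integral_Ioc,
    ← intervalIntegral.integral_of_le (by positivity : (0:ℝ) ≤ 2 * Real.pi)]
  have hderiv : ∀ t ∈ Set.uIcc (0:ℝ) (2 * Real.pi),
      HasDerivAt (fun t => F (x, t)) (pd (0,1) F (x, t)) t := by
    intro t _
    have h1 : HasDerivAt (fun t : ℝ => ((x, t) : ℝ × ℝ)) ((0 : ℝ), (1 : ℝ)) t :=
      (hasDerivAt_const t x).prodMk (hasDerivAt_id t)
    have h2 : HasFDerivAt F (fderiv ℝ F (x, t)) (x, t) :=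
      (hF.differentiable (by simp) (x, t)).hasFDerivAt
    exact (h2.comp_hasDerivAt t h1)
  have hint : IntervalIntegrable (fun t => pd (0,1) F (x, t)) volume 0 (2 * Real.pi) := by
    apply Continuous.intervalIntegrable
    exact ((pd_contDiff (0,1) F hF).continuous).comp (by fun_prop)
  rw [intervalIntegral.integral_eq_sub_of_hasDerivAt hderiv hint]
  have := hper (x, 0)
  simp only [Prod.mk_add_mk, add_zero, zero_add] at this
  rw [this]; ring

/-- Integral of the d2-derivative of a periodic smooth function over the period box is 0. -/
theorem integral_pd2 (F : ℝ × ℝ → ℝ) (hF : ContDiff ℝ (⊤ : ℕ∞) F)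
    (hper : ∀ x : ℝ × ℝ, F (x + (0, 2 * Real.pi)) = F x) :
    ∫ x in Set.Icc ((0:ℝ), (0:ℝ)) (2 * Real.pi, 2 * Real.pi), pd (0,1) F x = 0 := by
  rw [← Set.Icc_prod_Icc, Measure.volume_eq_prod]
  rw [setIntegral_prod]
  · have : ∀ x ∈ Set.Icc (0:ℝ) (2 * Real.pi),
        (∫ y in Set.Icc (0:ℝ) (2 * Real.pi), pd (0,1) F (x, y)) = 0 := fun x _ =>
      inner_ftc F hF hper x
    rw [setIntegral_congr_fun measurableSet_Icc this]
    simp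
  · exact ContinuousOn.integrableOn_compact ((isCompact_Icc).prod isCompact_Icc)
      ((pd_contDiff (0,1) F hF).continuous.continuousOn)

theorem setIntegral_box_swap (f : ℝ × ℝ → ℝ) (s : Set ℝ) :
    ∫ z in s ×ˢ s, f z.swap = ∫ z in s ×ˢ s, f z := by
  rw [Measure.volume_eq_prod, ← Measure.prod_restrict]
  exact integral_prod_swap f

theorem integral_pd1 (F : ℝ × ℝ → ℝ) (hF : ContDiff ℝ (⊤ : ℕ∞) F)
    (hper : ∀ x : ℝ × ℝ, F (x + (2 * Real.pi, 0)) = F x) :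
    ∫ x in Set.Icc ((0:ℝ), (0:ℝ)) (2 * Real.pi, 2 * Real.pi), pd (1,0) F x = 0 := by
  set σ : (ℝ × ℝ) →L[ℝ] (ℝ × ℝ) := (ContinuousLinearMap.snd ℝ ℝ ℝ).prod
    (ContinuousLinearMap.fst ℝ ℝ ℝ) with hσ
  set G : ℝ × ℝ → ℝ := fun z => F (σ z) with hGdef
  have hG : ContDiff ℝ (⊤ : ℕ∞) G := hF.comp (σ.contDiff)
  have hGper : ∀ x : ℝ × ℝ, G (x + (0, 2 * Real.pi)) = G x := by
    intro x
    show F _ = F _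
    have : σ (x + (0, 2 * Real.pi)) = σ x + (2 * Real.pi, 0) := by
      simp [hσ, Prod.ext_iff]
    rw [this, hper]
  have hpt : ∀ z : ℝ × ℝ, pd (0,1) G z = pd (1,0) F z.swap := by
    intro z
    have h1 : HasFDerivAt G ((fderiv ℝ F (σ z)).comp σ) z :=
      ((hF.differentiable (by simp) (σ z)).hasFDerivAt).comp z σ.hasFDerivAt
    have h2 : σ z = z.swap := rfl
    simp only [pd, h1.fderiv, ContinuousLinearMap.coe_comp', Function.comp_apply, ← h2]
    congr 1
  have key : ∀ z : ℝ × ℝ, pd (1,0) F z = pd (0,1) G z.swap := by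
    intro z; rw [hpt]; simp
  calc ∫ x in Set.Icc ((0:ℝ), (0:ℝ)) (2 * Real.pi, 2 * Real.pi), pd (1,0) F x
      = ∫ x in Set.Icc ((0:ℝ), (0:ℝ)) (2 * Real.pi, 2 * Real.pi), pd (0,1) G x.swap := by
        exact setIntegral_congr_fun measurableSet_Icc (fun x _ => key x)
    _ = ∫ x in Set.Icc ((0:ℝ), (0:ℝ)) (2 * Real.pi, 2 * Real.pi), pd (0,1) G x := by
        rw [← Set.Icc_prod_Icc]; exact setIntegral_box_swap _ _
    _ = 0 := integral_pd2 G hG hGper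

theorem pd_per (f : ℝ × ℝ → ℝ) (hf : Differentiable ℝ f) (c : ℝ × ℝ)
    (h : ∀ x, f (x + c) = f x) (v : ℝ × ℝ) : ∀ x, pd v f (x + c) = pd v f x := by
  intro x
  have hfun : (fun y => f (y + c)) = f := funext h
  have h2 : HasFDerivAt (fun y : ℝ × ℝ => y + c) (ContinuousLinearMap.id ℝ (ℝ × ℝ)) x :=
    (hasFDerivAt_id x).add_const c
  have h3 : HasFDerivAt (fun y => f (y + c))
      ((fderiv ℝ f (x + c)).comp (ContinuousLinearMap.id ℝ (ℝ × ℝ))) x :=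
    (hf (x + c)).hasFDerivAt.comp x h2
  rw [hfun] at h3
  simp only [pd, h3.fderiv]
  rfl


/-- For a smooth zero-mean divergence-free periodic field `u` on the 2-torus, the
Helmholtz projection `B = Π((u·∇)u)` of the nonlinear term (written as
`B = (u·∇)u − ∇p` with `B` divergence free) satisfies `⟨B, u⟩_{H¹} = 0`, where the
`H¹` inner product of zero-mean fields is `∫ Σ_{i,j} ∂ⱼBᵢ ∂ⱼuᵢ`. -/
theorem stmt17 (u : ℝ × ℝ → ℝ × ℝ) (p : ℝ × ℝ → ℝ) (B : ℝ × ℝ → ℝ × ℝ)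
    (hu : ContDiff ℝ (⊤ : ℕ∞) u) (hp : ContDiff ℝ (⊤ : ℕ∞) p)
    (hup : ∀ x : ℝ × ℝ, u (x + (2 * Real.pi, 0)) = u x ∧ u (x + (0, 2 * Real.pi)) = u x)
    (hpp : ∀ x : ℝ × ℝ, p (x + (2 * Real.pi, 0)) = p x ∧ p (x + (0, 2 * Real.pi)) = p x)
    (hmean : (∫ x in Set.Icc ((0:ℝ), (0:ℝ)) (2 * Real.pi, 2 * Real.pi), u x) = 0)
    (hdiv : ∀ x : ℝ × ℝ, (fderiv ℝ u x (1, 0)).1 + (fderiv ℝ u x (0, 1)).2 = 0)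
    (hB : ∀ x : ℝ × ℝ,
      B x = convect u u x - (fderiv ℝ p x (1, 0), fderiv ℝ p x (0, 1)))
    (hBdiv : ∀ x : ℝ × ℝ, (fderiv ℝ B x (1, 0)).1 + (fderiv ℝ B x (0, 1)).2 = 0) :
    (∫ x in Set.Icc ((0:ℝ), (0:ℝ)) (2 * Real.pi, 2 * Real.pi),
      ((fderiv ℝ B x (1, 0)).1 * (fderiv ℝ u x (1, 0)).1 +
       (fderiv ℝ B x (0, 1)).1 * (fderiv ℝ u x (0, 1)).1 +
       (fderiv ℝ B x (1, 0)).2 * (fderiv ℝ u x (1, 0)).2 +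
       (fderiv ℝ B x (0, 1)).2 * (fderiv ℝ u x (0, 1)).2)) = 0 := by
  have hud : Differentiable ℝ u := hu.differentiable (by simp)
  set a : ℝ × ℝ → ℝ := fun y => (u y).1 with hadef
  set b : ℝ × ℝ → ℝ := fun y => (u y).2 with hbdef
  have ha : ContDiff ℝ (⊤ : ℕ∞) a := contDiff_fst.comp hu
  have hb : ContDiff ℝ (⊤ : ℕ∞) b := contDiff_snd.comp hu
  have ha' : Differentiable ℝ a := ha.differentiable (by simp)
  have hb' : Differentiable ℝ b := hb.differentiable (by simp)
  have hp' : Differentiable ℝ p := hp.differentiable (by simp)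
  -- component derivatives of u
  have huc1 : ∀ (v x : ℝ × ℝ), (fderiv ℝ u x v).1 = pd v a x := by
    intro v x
    have h1 : HasFDerivAt a ((ContinuousLinearMap.fst ℝ ℝ ℝ).comp (fderiv ℝ u x)) x :=
      (hud x).hasFDerivAt.fst
    simp only [pd, h1.fderiv]; rfl
  have huc2 : ∀ (v x : ℝ × ℝ), (fderiv ℝ u x v).2 = pd v b x := by
    intro v x
    have h1 : HasFDerivAt b ((ContinuousLinearMap.snd ℝ ℝ ℝ).comp (fderiv ℝ u x)) x :=
      (hud x).hasFDerivAt.snd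
    simp only [pd, h1.fderiv]; rfl
  -- divergence-free, function level
  have hfun : pd (0,1) b = fun x => -(pd (1,0) a x) := by
    funext x
    have := hdiv x
    rw [huc1, huc2] at this
    linarith
  -- B as a pair of scalar fields
  have hBpair : B = fun x => ((fun y => a y * pd (1,0) a y + b y * pd (0,1) a y - pd (1,0) p y) x, (fun y => a y * pd (1,0) b y + b y * pd (0,1) b y - pd (0,1) p y) x) := by
    funext x
    rw [hB x]
    unfold convect
    have e1 := huc1 (1,0) x; have e2 := huc1 (0,1) x
    have e3 := huc2 (1,0) x; have e4 := huc2 (0,1) x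
    apply Prod.ext <;>
      simp only [Prod.fst_add, Prod.snd_add, Prod.smul_fst, Prod.smul_snd, Prod.fst_sub,
        Prod.snd_sub, smul_eq_mul, e1, e2, e3, e4] <;>
      show _ = _ <;> simp only [pd] <;> ring
  have hBc1 : ∀ (v x : ℝ × ℝ), (fderiv ℝ B x v).1 = pd v (fun y => a y * pd (1,0) a y + b y * pd (0,1) a y - pd (1,0) p y) x := by
    intro v x
    have hg1 : ContDiff ℝ (⊤ : ℕ∞) (fun y => a y * pd (1,0) a y + b y * pd (0,1) a y - pd (1,0) p y) := by fun_prop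
    have hg2 : ContDiff ℝ (⊤ : ℕ∞) (fun y => a y * pd (1,0) b y + b y * pd (0,1) b y - pd (0,1) p y) := by fun_prop
    have h1 : HasFDerivAt B ((fderiv ℝ (fun y => a y * pd (1,0) a y + b y * pd (0,1) a y - pd (1,0) p y) x).prod (fderiv ℝ (fun y => a y * pd (1,0) b y + b y * pd (0,1) b y - pd (0,1) p y) x)) x := by
      rw [hBpair]
      exact ((hg1.differentiable (by simp) x).hasFDerivAt).prodMk ((hg2.differentiable (by simp) x).hasFDerivAt)
    simp only [h1.fderiv]; rfl
  have hBc2 : ∀ (v x : ℝ × ℝ), (fderiv ℝ B x v).2 = pd v (fun y => a y * pd (1,0) b y + b y * pd (0,1) b y - pd (0,1) p y) x := by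
    intro v x
    have hg1 : ContDiff ℝ (⊤ : ℕ∞) (fun y => a y * pd (1,0) a y + b y * pd (0,1) a y - pd (1,0) p y) := by fun_prop
    have hg2 : ContDiff ℝ (⊤ : ℕ∞) (fun y => a y * pd (1,0) b y + b y * pd (0,1) b y - pd (0,1) p y) := by fun_prop
    have h1 : HasFDerivAt B ((fderiv ℝ (fun y => a y * pd (1,0) a y + b y * pd (0,1) a y - pd (1,0) p y) x).prod (fderiv ℝ (fun y => a y * pd (1,0) b y + b y * pd (0,1) b y - pd (0,1) p y) x)) x := by
      rw [hBpair]
      exact ((hg1.differentiable (by simp) x).hasFDerivAt).prodMk ((hg2.differentiable (by simp) x).hasFDerivAt)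
    simp only [h1.fderiv]; rfl
  -- the integrand as J
  set J : ℝ × ℝ → ℝ := fun x => (pd (1,0) (fun y => a y * pd (1,0) a y + b y * pd (0,1) a y - pd (1,0) p y) x * pd (1,0) a x + pd (0,1) (fun y => a y * pd (1,0) a y + b y * pd (0,1) a y - pd (1,0) p y) x * pd (0,1) a x + pd (1,0) (fun y => a y * pd (1,0) b y + b y * pd (0,1) b y - pd (0,1) p y) x * pd (1,0) b x + pd (0,1) (fun y => a y * pd (1,0) b y + b y * pd (0,1) b y - pd (0,1) p y) x * pd (0,1) b x) with hJdef
  have hEJ : ∀ x : ℝ × ℝ,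
      ((fderiv ℝ B x (1, 0)).1 * (fderiv ℝ u x (1, 0)).1 +
       (fderiv ℝ B x (0, 1)).1 * (fderiv ℝ u x (0, 1)).1 +
       (fderiv ℝ B x (1, 0)).2 * (fderiv ℝ u x (1, 0)).2 +
       (fderiv ℝ B x (0, 1)).2 * (fderiv ℝ u x (0, 1)).2) = J x := by
    intro x
    rw [hJdef]
    rw [huc1, huc1, huc2, huc2, hBc1, hBc1, hBc2, hBc2]
  set F1 : ℝ × ℝ → ℝ := fun y => ((a y * pd (1,0) a y + b y * pd (0,1) a y - pd (1,0) p y) * pd (1,0) a y) + ((a y * pd (1,0) a y + b y * pd (0,1) a y - pd (1,0) p y) * pd (1,0) a y) + ((a y * pd (1,0) b y + b y * pd (0,1) b y - pd (0,1) p y) * pd (1,0) b y) + ((a y * pd (1,0) b y + b y * pd (0,1) b y - pd (0,1) p y) * pd (1,0) b y) + (p y * (pd (1,0) (pd (1,0) a) y + pd (0,1) (pd (0,1) a) y)) + (p y * (pd (1,0) (pd (1,0) a) y + pd (0,1) (pd (0,1) a) y)) - (((a y * pd (1,0) b y + b y * pd (0,1) b y) * (pd (1,0) b y - pd (0,1)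 a y)) + ((a y * pd (1,0) b y + b y * pd (0,1) b y) * (pd (1,0) b y - pd (0,1) a y))) + a y * ((pd (1,0) b y - pd (0,1) a y) * (pd (1,0) b y - pd (0,1) a y)) with hF1def
  set F2 : ℝ × ℝ → ℝ := fun y => ((a y * pd (1,0) a y + b y * pd (0,1) a y - pd (1,0) p y) * pd (0,1) a y) + ((a y * pd (1,0) a y + b y * pd (0,1) a y - pd (1,0) p y) * pd (0,1) a y) + ((a y * pd (1,0) b y + b y * pd (0,1) b y - pd (0,1) p y) * pd (0,1) b y) + ((a y * pd (1,0) b y + b y * pd (0,1) b y - pd (0,1) p y) * pd (0,1) b y) + (p y * (pd (1,0) (pd (1,0) b) y + pd (0,1) (pd (0,1) b) y)) + (p y * (pd (1,0) (pd (1,0) b) y + pd (0,1) (pd (0,1) b) y)) + ((a y * pd (1,0) a y + b y * pd (0,1) a y) * (pd (1,0) b y - pd (0,1) a y)) + ((a y * pd (1,0) a y + b y * pd (0,1) a y) * (pd (1,0) b y - pd (0,1) a y)) + b y * ((pd (1,0) b y - pd (0,1) a y) * (pd (1,0) b y - pd (0,1) a y)) with hF2def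
  have hkey : ∀ x : ℝ × ℝ, J x + J x = pd (1,0) F1 x + pd (0,1) F2 x := by
    intro x
    rw [hJdef, hF1def, hF2def]
    exact key_identity a b p ha hb hp hfun x
  -- smoothness
  have hF1s : ContDiff ℝ (⊤ : ℕ∞) F1 := by rw [hF1def]; fun_prop
  have hF2s : ContDiff ℝ (⊤ : ℕ∞) F2 := by rw [hF2def]; fun_prop
  -- periodicity of atoms
  have pua : ∀ x : ℝ × ℝ, a (x + (2 * Real.pi, 0)) = a x := fun x => by
    rw [hadef]; show (u _).1 = (u x).1; rw [(hup x).1]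
  have pub : ∀ x : ℝ × ℝ, b (x + (2 * Real.pi, 0)) = b x := fun x => by
    rw [hbdef]; show (u _).2 = (u x).2; rw [(hup x).1]
  have pup : ∀ x : ℝ × ℝ, p (x + (2 * Real.pi, 0)) = p x := fun x => (hpp x).1
  have qua : ∀ x : ℝ × ℝ, a (x + (0, 2 * Real.pi)) = a x := fun x => by
    rw [hadef]; show (u _).1 = (u x).1; rw [(hup x).2]
  have qub : ∀ x : ℝ × ℝ, b (x + (0, 2 * Real.pi)) = b x := fun x => by
    rw [hbdef]; show (u _).2 = (u x).2; rw [(hup x).2]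
  have qup : ∀ x : ℝ × ℝ, p (x + (0, 2 * Real.pi)) = p x := fun x => (hpp x).2
  have hF1per : ∀ x : ℝ × ℝ, F1 (x + (2 * Real.pi, 0)) = F1 x := by
    have w1 := pd_per a ha' _ pua (1,0); have w2 := pd_per a ha' _ pua (0,1)
    have w3 := pd_per b hb' _ pub (1,0); have w4 := pd_per b hb' _ pub (0,1)
    have w5 := pd_per p hp' _ pup (1,0); have w6 := pd_per p hp' _ pup (0,1)
    have w7 := pd_per _ (pd_differentiable (1,0) a ha) _ w1 (1,0)
    have w8 := pd_per _ (pd_differentiable (0,1) a ha) _ w2 (0,1)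
    have w9 := pd_per _ (pd_differentiable (1,0) b hb) _ w3 (1,0)
    have w10 := pd_per _ (pd_differentiable (0,1) b hb) _ w4 (0,1)
    intro x
    rw [hF1def]
    simp only [pua, pub, pup, w1, w2, w3, w4, w5, w6, w7, w8, w9, w10]
  have hF2per : ∀ x : ℝ × ℝ, F2 (x + (0, 2 * Real.pi)) = F2 x := by
    have w1 := pd_per a ha' _ qua (1,0); have w2 := pd_per a ha' _ qua (0,1)
    have w3 := pd_per b hb' _ qub (1,0); have w4 := pd_per b hb' _ qub (0,1)
    have w5 := pd_per p hp' _ qup (1,0); have w6 := pd_per p hp' _ qup (0,1)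
    have w7 := pd_per _ (pd_differentiable (1,0) a ha) _ w1 (1,0)
    have w8 := pd_per _ (pd_differentiable (0,1) a ha) _ w2 (0,1)
    have w9 := pd_per _ (pd_differentiable (1,0) b hb) _ w3 (1,0)
    have w10 := pd_per _ (pd_differentiable (0,1) b hb) _ w4 (0,1)
    intro x
    rw [hF2def]
    simp only [qua, qub, qup, w1, w2, w3, w4, w5, w6, w7, w8, w9, w10]
  have hI1 : (∫ x in Set.Icc ((0:ℝ), (0:ℝ)) (2 * Real.pi, 2 * Real.pi), pd (1,0) F1 x) = 0 :=
    integral_pd1 F1 hF1s hF1per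
  have hI2 : (∫ x in Set.Icc ((0:ℝ), (0:ℝ)) (2 * Real.pi, 2 * Real.pi), pd (0,1) F2 x) = 0 :=
    integral_pd2 F2 hF2s hF2per
  -- integrability
  have hJc : Continuous J := by rw [hJdef]; fun_prop
  have hbox : IsCompact (Set.Icc ((0:ℝ), (0:ℝ)) (2 * Real.pi, 2 * Real.pi)) := isCompact_Icc
  have hJint : MeasureTheory.IntegrableOn J
      (Set.Icc ((0:ℝ), (0:ℝ)) (2 * Real.pi, 2 * Real.pi)) :=
    hJc.continuousOn.integrableOn_compact hbox
  have hP1int : MeasureTheory.IntegrableOn (pd (1,0) F1)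
      (Set.Icc ((0:ℝ), (0:ℝ)) (2 * Real.pi, 2 * Real.pi)) :=
    ((pd_contDiff (1,0) F1 hF1s).continuous.continuousOn).integrableOn_compact hbox
  have hP2int : MeasureTheory.IntegrableOn (pd (0,1) F2)
      (Set.Icc ((0:ℝ), (0:ℝ)) (2 * Real.pi, 2 * Real.pi)) :=
    ((pd_contDiff (0,1) F2 hF2s).continuous.continuousOn).integrableOn_compact hbox
  have step1 : (∫ x in Set.Icc ((0:ℝ), (0:ℝ)) (2 * Real.pi, 2 * Real.pi),
      ((fderiv ℝ B x (1, 0)).1 * (fderiv ℝ u x (1, 0)).1 +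
       (fderiv ℝ B x (0, 1)).1 * (fderiv ℝ u x (0, 1)).1 +
       (fderiv ℝ B x (1, 0)).2 * (fderiv ℝ u x (1, 0)).2 +
       (fderiv ℝ B x (0, 1)).2 * (fderiv ℝ u x (0, 1)).2))
      = ∫ x in Set.Icc ((0:ℝ), (0:ℝ)) (2 * Real.pi, 2 * Real.pi), J x :=
    MeasureTheory.setIntegral_congr_fun measurableSet_Icc (fun x _ => hEJ x)
  have step2 : (∫ x in Set.Icc ((0:ℝ), (0:ℝ)) (2 * Real.pi, 2 * Real.pi), (J x + J x))
      = ∫ x in Set.Icc ((0:ℝ), (0:ℝ)) (2 * Real.pi, 2 * Real.pi),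
        (pd (1,0) F1 x + pd (0,1) F2 x) :=
    MeasureTheory.setIntegral_congr_fun measurableSet_Icc (fun x _ => hkey x)
  rw [MeasureTheory.integral_add hJint hJint] at step2
  rw [MeasureTheory.integral_add hP1int hP2int] at step2
  rw [hI1, hI2] at step2
  rw [step1]
  linarith
end
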